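/- arXiv:1803.10994 — 3 statements merged into one kernel-verified Lean document; each statement's English description precedes it below -/
import Mathlib

section
/- Let $A \in \mathbb{C}^{O_1 \times N_1}$ and $B \in \mathbb{C}^{O_2 \times N_2}$, and let $s_1 \le N_1$, $s_2 \le N_2$ be positive integers. If $A$ has restricted isometry constant $\delta_{s_1}(A)$ and $B$ has restricted isometry constant $\delta_{s_2}(B)$, then the Kronecker product $A \otimes B \in \mathbb{C}^{O_1 O_2 \times N_1 N_2}$ satisfies the hierarchical restricted isometry property with constant $\delta_{(s_1,s_2)}(A \otimes B) \le (1+\delta_{s_1}(A))(1+\delta_{s_2}(B)) - 1$; that is, $(1-\delta)\|x\|^2 \le \|(A \otimes B)x\|^2 \le (1+\delta)\|x\|^2$ with $\delta = (1+\delta_{s_1}(A))(1+\delta_{s_2}(B)) - 1$ for every hierarchically $(s_1,s_2)$-sparse $x \in \mathbb{C}^{N_1 N_2}$. -/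
open scoped BigOperators Matrix Kronecker

noncomputable section

/-- Squared `ℓ₂` norm of a finitely indexed complex vector. -/
def sqnorm {ι : Type*} [Fintype ι] (x : ι → ℂ) : ℝ := ∑ i, ‖x i‖ ^ 2

/-- A vector is `s`-sparse if at most `s` of its entries are nonzero. -/
def Sparse {ι : Type*} (s : ℕ) (x : ι → ℂ) : Prop := (Function.support x).ncard ≤ s

/-- Hierarchical `(s₁, s₂)`-sparsity: at most `s₁` blocks are nonzero and every
block is `s₂`-sparse. -/
def HiSparse2 {ι₁ ι₂ : Type*} (s₁ s₂ : ℕ) (x : ι₁ × ι₂ → ℂ) : Prop :=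
  {i : ι₁ | ∃ j, x (i, j) ≠ 0}.ncard ≤ s₁ ∧ ∀ i : ι₁, Sparse s₂ fun j => x (i, j)

/-- `A` satisfies the restricted isometry property of order `s` with constant `δ`. -/
def SatRIP {O ι : Type*} [Fintype O] [Fintype ι] (A : Matrix O ι ℂ) (s : ℕ) (δ : ℝ) : Prop :=
  ∀ x : ι → ℂ, Sparse s x →
    (1 - δ) * sqnorm x ≤ sqnorm (A.mulVec x) ∧ sqnorm (A.mulVec x) ≤ (1 + δ) * sqnorm x

/-- The restricted isometry constant `δ_s(A)`: the smallest `δ ≥ 0` such that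
`(1-δ)‖x‖² ≤ ‖Ax‖² ≤ (1+δ)‖x‖²` for all `s`-sparse `x`. -/
def RIPconst {O ι : Type*} [Fintype O] [Fintype ι] (A : Matrix O ι ℂ) (s : ℕ) : ℝ :=
  sInf {δ : ℝ | 0 ≤ δ ∧ SatRIP A s δ}

lemma sqnorm_nonneg {ι : Type*} [Fintype ι] (x : ι → ℂ) : 0 ≤ sqnorm x :=
  Finset.sum_nonneg fun _ _ => pow_nonneg (norm_nonneg _) 2

lemma satRIP_exists {O ι : Type*} [Fintype O] [Fintype ι] (A : Matrix O ι ℂ) (s : ℕ) :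
    ∃ δ : ℝ, 0 ≤ δ ∧ SatRIP A s δ := by
  have hC0 : (0:ℝ) ≤ ∑ i, ∑ k, ‖A i k‖ ^ 2 :=
    Finset.sum_nonneg fun _ _ => Finset.sum_nonneg fun _ _ => pow_nonneg (norm_nonneg _) 2
  refine ⟨1 + ∑ i, ∑ k, ‖A i k‖ ^ 2, by linarith, ?_⟩
  intro x _
  have hq : 0 ≤ sqnorm x := sqnorm_nonneg x
  have hp : 0 ≤ sqnorm (A.mulVec x) := sqnorm_nonneg _
  have key : sqnorm (A.mulVec x) ≤ (∑ i, ∑ k, ‖A i k‖ ^ 2) * sqnorm x := by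
    rw [sqnorm, Finset.sum_mul]
    refine Finset.sum_le_sum fun i _ => ?_
    have h1 : ‖A.mulVec x i‖ ≤ ∑ k, ‖A i k‖ * ‖x k‖ := by
      simp only [Matrix.mulVec, dotProduct]
      refine (norm_sum_le _ _).trans_eq ?_
      exact Finset.sum_congr rfl fun k _ => norm_mul _ _
    have h2 : ‖A.mulVec x i‖ ^ 2 ≤ (∑ k, ‖A i k‖ * ‖x k‖) ^ 2 := by
      have := norm_nonneg (A.mulVec x i)
      nlinarith
    exact h2.trans (Finset.sum_mul_sq_le_sq_mul_sq _ _ _)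
  constructor
  · nlinarith
  · nlinarith

lemma aux_le {p q : ℝ} (h : ∀ ε : ℝ, 0 < ε → p ≤ q + ε) : p ≤ q := by
  by_contra hc
  push_neg at hc
  have := h ((p - q) / 2) (by linarith)
  linarith

lemma satRIP_ripconst {O ι : Type*} [Fintype O] [Fintype ι] (A : Matrix O ι ℂ) (s : ℕ) :
    0 ≤ RIPconst A s ∧ SatRIP A s (RIPconst A s) := by
  obtain ⟨δ₀, hδ₀⟩ := satRIP_exists A s
  have hne : Set.Nonempty {δ : ℝ | 0 ≤ δ ∧ SatRIP A s δ} := ⟨δ₀, hδ₀⟩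
  have h0 : 0 ≤ RIPconst A s := le_csInf hne fun δ hδ => hδ.1
  refine ⟨h0, fun x hx => ?_⟩
  have hq : 0 ≤ sqnorm x := sqnorm_nonneg x
  have hp : 0 ≤ sqnorm (A.mulVec x) := sqnorm_nonneg _
  have key : ∀ ε : ℝ, 0 < ε →
      (1 - RIPconst A s) * sqnorm x ≤ sqnorm (A.mulVec x) + ε * sqnorm x ∧
      sqnorm (A.mulVec x) ≤ (1 + RIPconst A s) * sqnorm x + ε * sqnorm x := by
    intro ε hε
    obtain ⟨δ, hδS, hδlt⟩ := Real.lt_sInf_add_pos hne hε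
    have h1 := (hδS.2 x hx).1
    have h2 := (hδS.2 x hx).2
    have hRδ : δ < RIPconst A s + ε := hδlt
    constructor <;> nlinarith
  rcases eq_or_lt_of_le hq with hq0 | hq0
  · have h2 := (hδ₀.2 x hx).2
    constructor <;> nlinarith
  · constructor
    · refine aux_le fun ε hε => ?_
      have := (key (ε / sqnorm x) (by positivity)).1
      have hx' : ε / sqnorm x * sqnorm x = ε := div_mul_cancel₀ ε (ne_of_gt hq0)
      linarith [this, hx'.le, hx'.ge]
    · refine aux_le fun ε hε => ?_
      have := (key (ε / sqnorm x) (by positivity)).2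
      have hx' : ε / sqnorm x * sqnorm x = ε := div_mul_cancel₀ ε (ne_of_gt hq0)
      linarith [this, hx'.le, hx'.ge]

/-- The Kronecker product `A ⊗ₖ B` satisfies the hierarchical RIP
with constant `δ = (1 + δ_{s₁}(A)) * (1 + δ_{s₂}(B)) - 1` on hierarchically
`(s₁, s₂)`-sparse vectors. -/
theorem kronecker_hiRIP {O₁ N₁ O₂ N₂ : ℕ}
    (A : Matrix (Fin O₁) (Fin N₁) ℂ) (B : Matrix (Fin O₂) (Fin N₂) ℂ)
    (s₁ s₂ : ℕ) (hs₁ : 0 < s₁) (hs₂ : 0 < s₂) (hs₁N : s₁ ≤ N₁) (hs₂N : s₂ ≤ N₂) :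
    ∀ x : Fin N₁ × Fin N₂ → ℂ, HiSparse2 s₁ s₂ x →
      (1 - ((1 + RIPconst A s₁) * (1 + RIPconst B s₂) - 1)) * sqnorm x
          ≤ sqnorm ((A ⊗ₖ B).mulVec x) ∧
        sqnorm ((A ⊗ₖ B).mulVec x)
          ≤ (1 + ((1 + RIPconst A s₁) * (1 + RIPconst B s₂) - 1)) * sqnorm x := by
  obtain ⟨ha, hA⟩ := satRIP_ripconst A s₁
  obtain ⟨hb, hB⟩ := satRIP_ripconst B s₂
  intro x hx
  set a := RIPconst A s₁ with hadef
  set b := RIPconst B s₂ with hbdef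
  set y : Fin N₁ → Fin O₂ → ℂ := fun k => B.mulVec fun l => x (k, l) with hy
  set Y : ℝ := ∑ j, sqnorm fun k => y k j with hYdef
  have hX : 0 ≤ sqnorm x := sqnorm_nonneg x
  have hXsplit : sqnorm x = ∑ k, sqnorm fun l => x (k, l) := by
    rw [sqnorm, Fintype.sum_prod_type]; rfl
  have hYsplit : Y = ∑ k, sqnorm (B.mulVec fun l => x (k, l)) := by
    rw [hYdef]
    simp only [sqnorm]
    exact Finset.sum_comm
  have hY0 : 0 ≤ Y := Finset.sum_nonneg fun j _ => sqnorm_nonneg _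
  have hY1 : (1 - b) * sqnorm x ≤ Y := by
    rw [hYsplit, hXsplit, Finset.mul_sum]
    exact Finset.sum_le_sum fun k _ => (hB _ (hx.2 k)).1
  have hY2 : Y ≤ (1 + b) * sqnorm x := by
    rw [hYsplit, hXsplit, Finset.mul_sum]
    exact Finset.sum_le_sum fun k _ => (hB _ (hx.2 k)).2
  have hcol : ∀ j, Sparse s₁ fun k => y k j := by
    intro j
    refine le_trans (Set.ncard_le_ncard ?_ (Set.toFinite _)) hx.1
    intro k hk
    simp only [Function.mem_support] at hk
    by_contra hc
    simp only [Set.mem_setOf_eq, not_exists, not_not] at hc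
    apply hk
    simp [hy, Matrix.mulVec, dotProduct, hc]
  have hPeq : sqnorm ((A ⊗ₖ B).mulVec x) = ∑ j, sqnorm (A.mulVec fun k => y k j) := by
    simp only [sqnorm]
    rw [Fintype.sum_prod_type, Finset.sum_comm]
    refine Finset.sum_congr rfl fun j _ => ?_
    refine Finset.sum_congr rfl fun i _ => ?_
    have harg : ((A ⊗ₖ B).mulVec x) (i, j) = (A.mulVec fun k => y k j) i := by
      simp only [hy, Matrix.mulVec, dotProduct, Matrix.kroneckerMap_apply,
        Fintype.sum_prod_type, Finset.mul_sum]
      exact Finset.sum_congr rfl fun k _ => Finset.sum_congr rfl fun l _ => by ring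
    rw [harg]
  have hP0 : 0 ≤ sqnorm ((A ⊗ₖ B).mulVec x) := sqnorm_nonneg _
  have hP1 : (1 - a) * Y ≤ sqnorm ((A ⊗ₖ B).mulVec x) := by
    rw [hPeq, hYdef, Finset.mul_sum]
    exact Finset.sum_le_sum fun j _ => (hA _ (hcol j)).1
  have hP2 : sqnorm ((A ⊗ₖ B).mulVec x) ≤ (1 + a) * Y := by
    rw [hPeq, hYdef, Finset.mul_sum]
    exact Finset.sum_le_sum fun j _ => (hA _ (hcol j)).2
  constructor
  · rcases le_or_gt a 1 with h | h
    · have h1 : (1 - a) * ((1 - b) * sqnorm x) ≤ (1 - a) * Y :=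
        mul_le_mul_of_nonneg_left hY1 (by linarith)
      nlinarith [mul_nonneg (mul_nonneg ha hb) hX]
    · have h1 : (1 - a) * Y ≥ (1 - a) * ((1 + b) * sqnorm x) := by
        have := mul_le_mul_of_nonpos_left hY2 (by linarith : (1 : ℝ) - a ≤ 0)
        linarith
      nlinarith [mul_nonneg hb hX]
  · have h1 : (1 + a) * Y ≤ (1 + a) * ((1 + b) * sqnorm x) :=
      mul_le_mul_of_nonneg_left hY2 (by linarith)
    nlinarith
end
end

section
/- There exists a universal constant $C > 0$ with the following property: for every integer $M \ge 1$, every integer $K \ge 1$, and every $\theta \in [0,1)$, there exists a vector $u_{\theta,K} \in \mathbb{C}^M$ with at most $2K+1$ nonzero entries such that $\|u_{\theta,K} - u_\theta\| \le C/\sqrt{K}$, where $u_\theta := (1/M) F_M^H a(\theta)$. In particular, the constant $C$ is independent of $\theta$ and of the dimension $M$. -/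
open scoped BigOperators Matrix

noncomputable section

/-- Array manifold vector `a(θ) ∈ ℂ^M`, `a(θ)_m = e^{-j 2π m θ}`. -/
def aVec (M : ℕ) (θ : ℝ) : Fin M → ℂ :=
  fun m => Complex.exp (-(((2 * Real.pi * (m : ℕ) * θ) : ℝ) : ℂ) * Complex.I)

/-- The `M × M` DFT matrix, `(F_M)_{m,n} = e^{-j 2π m n / M}`. -/
def dftMat (M : ℕ) : Matrix (Fin M) (Fin M) ℂ :=
  Matrix.of fun m n => Complex.exp (-(((2 * Real.pi * (m : ℕ) * (n : ℕ) / M) : ℝ) : ℂ) * Complex.I)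

/-- Discretized angular representation `u_θ = (1/M) F_M^H a(θ)`. -/
def uVec (M : ℕ) (θ : ℝ) : Fin M → ℂ :=
  (1 / (M : ℂ)) • (dftMat M)ᴴ.mulVec (aVec M θ)

/-! Each entry of `u_θ` is a normalized Dirichlet kernel,
`u_θ(i) = (1/M) ∑_{m<M} z^m` with `z = e^{2πj(i/M - θ)}`, so the geometric sum and Jordan's
inequality give `|u_θ(i)| ≤ 1 / (2M‖i/M - θ‖)`, `‖·‖` being the distance to the nearest integer.
Index the bins by their signed distance `h_i ∈ ℤ` from the peak bin `round(Mθ)`, taken modulo `M`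
so that `|h_i - M(i/M - θ - round(i/M - θ))| ≤ 1/2`. These labels are distinct, so keeping the
bins with `|h_i| ≤ K` keeps at most `2K + 1` entries, and every discarded entry has
`|u_θ(i)| ≤ 1/|h_i|` with `|h_i| > K`; the squared error is therefore at most
`∑_{|n| > K} 1/n² ≤ 4/(K + 1)`. -/

open Complex
open scoped Real Finset

theorem two_mul_abs_le_abs_sin_pi_mul {x : ℝ} (hx : |x| ≤ 1 / 2) :
    2 * |x| ≤ |Real.sin (π * x)| := by
  have hjordan : 2 / π * (π * |x|) ≤ Real.sin (π * |x|) :=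
    Real.mul_le_sin (by positivity) (by nlinarith [Real.pi_pos])
  have hodd : |Real.sin (π * x)| = |Real.sin (π * |x|)| := by
    rcases abs_choice x with h | h <;> simp [h, Real.sin_neg]
  rw [hodd]
  calc 2 * |x| = 2 / π * (π * |x|) := by field_simp
    _ ≤ _ := hjordan.trans (le_abs_self _)

theorem four_mul_abs_sub_round_le_norm_exp_sub_one (x : ℝ) :
    4 * |x - round x| ≤ ‖cexp (I * ↑(2 * π * x)) - 1‖ := by
  have hsin : |Real.sin (π * x)| = |Real.sin (π * (x - round x))| := by
    rw [show π * x = π * (x - round x) + (round x : ℤ) * π by ring, Real.sin_add_int_mul_pi,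
      abs_mul, abs_neg_one_zpow, one_mul]
  rw [norm_exp_I_mul_ofReal_sub_one, show 2 * π * x / 2 = π * x by ring, norm_mul,
    Real.norm_eq_abs, Real.norm_eq_abs, abs_two, hsin]
  linarith [two_mul_abs_le_abs_sin_pi_mul (abs_sub_round x)]

theorem norm_geom_sum_le {z : ℂ} (hz : ‖z‖ = 1) (hz1 : z ≠ 1) (n : ℕ) :
    ‖∑ m ∈ Finset.range n, z ^ m‖ ≤ 2 / ‖z - 1‖ := by
  rw [geom_sum_eq hz1, norm_div]
  gcongr
  calc ‖z ^ n - 1‖ ≤ ‖z ^ n‖ + ‖(1 : ℂ)‖ := norm_sub_le _ _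
    _ = 2 := by rw [norm_pow, hz, one_pow, norm_one]; norm_num

theorem norm_geom_sum_exp_le {x : ℝ} (hx : x ≠ round x) (n : ℕ) :
    ‖∑ m ∈ Finset.range n, cexp (I * ↑(2 * π * x)) ^ m‖ ≤ 1 / (2 * |x - round x|) := by
  have hpos : 0 < |x - round x| := abs_pos.2 (sub_ne_zero.2 hx)
  have hdist := four_mul_abs_sub_round_le_norm_exp_sub_one x
  have hz1 : cexp (I * ↑(2 * π * x)) ≠ 1 := by
    intro h; rw [h, sub_self, norm_zero] at hdist; linarith
  calc _ ≤ 2 / ‖cexp (I * ↑(2 * π * x)) - 1‖ :=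
        norm_geom_sum_le (by rw [mul_comm]; exact norm_exp_ofReal_mul_I _) hz1 n
    _ ≤ 2 / (4 * |x - round x|) := by gcongr
    _ = 1 / (2 * |x - round x|) := by field_simp; ring

theorem sum_inv_sq_le_of_lt {k : ℕ} (s : Finset ℕ) (hs : ∀ m ∈ s, k < m) :
    ∑ m ∈ s, ((m : ℝ) ^ 2)⁻¹ ≤ 2 / (k + 1) := by
  have hsub : s ⊆ Finset.Ioo k (s.sup id + 1) := fun m hm =>
    Finset.mem_Ioo.2 ⟨hs m hm, Nat.lt_succ_of_le (Finset.le_sup (f := id) hm)⟩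
  exact (Finset.sum_le_sum_of_subset_of_nonneg hsub fun _ _ _ => by positivity).trans
    (sum_Ioo_inv_sq_le k _)

theorem sum_inv_sq_le_of_lt_natAbs {k : ℕ} (s : Finset ℤ) (hs : ∀ n ∈ s, k < n.natAbs) :
    ∑ n ∈ s, ((n : ℝ) ^ 2)⁻¹ ≤ 4 / (k + 1) := by
  have hfiber (m : ℕ) : #{n ∈ s | n.natAbs = m} ≤ 2 := by
    calc #{n ∈ s | n.natAbs = m} ≤ #({(m : ℤ), -(m : ℤ)} : Finset ℤ) := by
          refine Finset.card_le_card fun n hn => ?_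
          simpa [Int.natAbs_eq_iff] using (Finset.mem_filter.1 hn).2
      _ ≤ 2 := Finset.card_le_two
  calc ∑ n ∈ s, ((n : ℝ) ^ 2)⁻¹ = ∑ n ∈ s, (((n.natAbs : ℕ) : ℝ) ^ 2)⁻¹ := by
        simp only [Nat.cast_natAbs, Int.cast_abs, sq_abs]
    _ = ∑ m ∈ s.image Int.natAbs, #{n ∈ s | n.natAbs = m} • ((m : ℝ) ^ 2)⁻¹ :=
        Finset.sum_comp (fun m : ℕ => ((m : ℝ) ^ 2)⁻¹) Int.natAbs
    _ ≤ ∑ m ∈ s.image Int.natAbs, 2 * ((m : ℝ) ^ 2)⁻¹ := by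
        gcongr with m
        rw [nsmul_eq_mul]
        gcongr
        exact_mod_cast hfiber m
    _ ≤ 2 * (2 / (k + 1)) := by
        rw [← Finset.mul_sum]
        gcongr
        exact sum_inv_sq_le_of_lt _ (by simpa using hs)
    _ = 4 / (k + 1) := by ring

theorem sqnorm_ite_sub {ι : Type*} [Fintype ι] (p : ι → Prop) [DecidablePred p] (x : ι → ℂ) :
    sqnorm ((fun i => if p i then x i else 0) - x) = ∑ i with ¬p i, ‖x i‖ ^ 2 := by
  rw [sqnorm, Finset.sum_filter]
  refine Finset.sum_congr rfl fun i _ => ?_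
  split_ifs with h <;> simp [h]

theorem sparse_ite {ι : Type*} [Fintype ι] (p : ι → Prop) [DecidablePred p] (x : ι → ℂ)
    {s : ℕ} (hs : #{i | p i} ≤ s) : Sparse s (fun i => if p i then x i else 0) := by
  have hsupp : Function.support (fun i => if p i then x i else 0) ⊆ ↑({i | p i} : Finset ι) :=
    fun i hi => by by_contra h; simp_all
  calc _ ≤ (↑({i | p i} : Finset ι) : Set ι).ncard :=
        Set.ncard_le_ncard hsupp (Finset.finite_toSet _)
    _ = #{i | p i} := Set.ncard_coe_finset _
    _ ≤ s := hs

theorem uVec_apply (M : ℕ) (θ : ℝ) (i : Fin M) :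
    uVec M θ i = 1 / (M : ℂ) * ∑ m ∈ Finset.range M, cexp (I * ↑(2 * π * (i / M - θ))) ^ m := by
  have hterm (m : Fin M) :
      star (dftMat M m i) * aVec M θ m = cexp (I * ↑(2 * π * (i / M - θ))) ^ (m : ℕ) := by
    rw [dftMat, Matrix.of_apply, aVec, star_def, ← exp_conj, ← exp_add, ← exp_nat_mul]
    congr 1
    simp only [map_mul, map_neg, conj_ofReal, conj_I]
    push_cast
    ring
  simp only [uVec, Pi.smul_apply, smul_eq_mul, Matrix.mulVec, dotProduct,
    Matrix.conjTranspose_apply, hterm]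
  rw [Fin.sum_univ_eq_sum_range (fun m => cexp (I * ↑(2 * π * (i / M - θ))) ^ m)]

/-- The signed distance, modulo `M`, from bin `i` to the peak bin `round (M * θ)`. -/
def binOffset (M : ℕ) (θ : ℝ) (i : Fin M) : ℤ :=
  i - M * round ((i : ℝ) / M - θ) - round (M * θ)

theorem binOffset_injective (M : ℕ) (θ : ℝ) : Function.Injective (binOffset M θ) := by
  intro i j hij
  have hdvd : (M : ℤ) ∣ (i : ℤ) - j :=
    ⟨round ((i : ℝ) / M - θ) - round ((j : ℝ) / M - θ), by unfold binOffset at hij; linarith⟩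
  have hlt : |(i : ℤ) - j| < M := by
    rw [abs_sub_lt_iff]; omega
  exact Fin.ext (by exact_mod_cast sub_eq_zero.1 (Int.eq_zero_of_abs_lt_dvd hdvd hlt))

theorem abs_binOffset_sub_le {M : ℕ} (hM : M ≠ 0) (θ : ℝ) (i : Fin M) :
    |(binOffset M θ i : ℝ) - M * ((i / M - θ) - round ((i : ℝ) / M - θ))| ≤ 1 / 2 := by
  have hid : (binOffset M θ i : ℝ) - M * ((i / M - θ) - round ((i : ℝ) / M - θ))
      = M * θ - round ((M : ℝ) * θ) := by
    unfold binOffset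
    push_cast
    field_simp
    ring
  rw [hid]
  exact abs_sub_round _

theorem norm_uVec_le_inv_abs_binOffset {M : ℕ} (hM : M ≠ 0) (θ : ℝ) (i : Fin M)
    (hi : binOffset M θ i ≠ 0) : ‖uVec M θ i‖ ≤ |(binOffset M θ i : ℝ)|⁻¹ := by
  set x : ℝ := i / M - θ
  set n : ℝ := (binOffset M θ i : ℝ)
  have hMpos : (0 : ℝ) < M := by positivity
  have hn : 1 ≤ |n| := by simp only [n, ← Int.cast_abs]; exact_mod_cast Int.one_le_abs hi
  have hclose : |n - M * (x - round x)| ≤ 1 / 2 := abs_binOffset_sub_le hM θ i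
  have hfar : |n| ≤ 2 * (M * |x - round x|) := by
    have := abs_sub_abs_le_abs_sub n (M * (x - round x))
    rw [abs_mul, abs_of_pos hMpos] at this
    linarith
  have hx : x ≠ round x := by
    intro h; rw [sub_eq_zero.2 h, abs_zero] at hfar; linarith
  rw [uVec_apply, norm_mul, norm_div, norm_one, Complex.norm_natCast]
  calc 1 / (M : ℝ) * ‖∑ m ∈ Finset.range M, cexp (I * ↑(2 * π * x)) ^ m‖
      ≤ 1 / M * (1 / (2 * |x - round x|)) := by gcongr; exact norm_geom_sum_exp_le hx M
    _ = (2 * (M * |x - round x|))⁻¹ := by field_simp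
    _ ≤ |n|⁻¹ := by gcongr

theorem card_abs_binOffset_le (M : ℕ) (θ : ℝ) (K : ℕ) :
    #{i | |binOffset M θ i| ≤ K} ≤ 2 * K + 1 := by
  calc #{i | |binOffset M θ i| ≤ K} ≤ #(Finset.Icc (-(K : ℤ)) K) :=
        Finset.card_le_card_of_injOn _
          (fun _ hi => Finset.mem_Icc.2 (abs_le.1 (by simpa using hi)))
          (binOffset_injective M θ).injOn
    _ = 2 * K + 1 := by rw [Int.card_Icc]; omega

theorem sum_sq_norm_uVec_of_lt_abs_binOffset_le {M : ℕ} (hM : M ≠ 0) (θ : ℝ) (K : ℕ) :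
    ∑ i with ¬|binOffset M θ i| ≤ K, ‖uVec M θ i‖ ^ 2 ≤ 4 / (K + 1) := by
  set T : Finset (Fin M) := {i | ¬|binOffset M θ i| ≤ K}
  have hT (i) (hi : i ∈ T) : (K : ℤ) < |binOffset M θ i| := by simpa [T] using hi
  calc ∑ i ∈ T, ‖uVec M θ i‖ ^ 2 ≤ ∑ i ∈ T, ((binOffset M θ i : ℝ) ^ 2)⁻¹ := by
        gcongr with i hi
        have hne : binOffset M θ i ≠ 0 := fun h0 => by
          have := hT i hi; rw [h0, abs_zero] at this; omega
        simpa only [inv_pow, sq_abs] using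
          pow_le_pow_left₀ (norm_nonneg _) (norm_uVec_le_inv_abs_binOffset hM θ i hne) 2
    _ = ∑ n ∈ T.image (binOffset M θ), ((n : ℝ) ^ 2)⁻¹ :=
        (Finset.sum_image (f := fun n : ℤ => ((n : ℝ) ^ 2)⁻¹)
          fun _ _ _ _ h => binOffset_injective M θ h).symm
    _ ≤ 4 / (K + 1) := sum_inv_sq_le_of_lt_natAbs _ fun n hn => by
        obtain ⟨i, hi, rfl⟩ := Finset.mem_image.1 hn
        have := hT i hi
        rw [Int.abs_eq_natAbs] at this
        omega

/-- There is a universal constant `C > 0`, independent of `θ`, `K` and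
the dimension `M`, such that `u_θ` admits a `(2K+1)`-sparse approximation within
`ℓ₂`-distance `C/√K`. -/
theorem uVec_sparse_approx :
    ∃ C : ℝ, 0 < C ∧ ∀ (M K : ℕ), 1 ≤ M → 1 ≤ K → ∀ θ : ℝ, 0 ≤ θ → θ < 1 →
      ∃ u' : Fin M → ℂ, Sparse (2 * K + 1) u' ∧
        Real.sqrt (sqnorm (u' - uVec M θ)) ≤ C / Real.sqrt K := by
  refine ⟨2, two_pos, fun M K hM hK θ _ _ => ?_⟩
  refine ⟨fun i => if |binOffset M θ i| ≤ K then uVec M θ i else 0,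
    sparse_ite _ _ (card_abs_binOffset_le M θ K), ?_⟩
  have hKpos : (0 : ℝ) < K := by exact_mod_cast hK
  calc Real.sqrt (sqnorm _) ≤ Real.sqrt (4 / K) := by
        rw [sqnorm_ite_sub]
        gcongr
        exact (sum_sq_norm_uVec_of_lt_abs_binOffset_le (by omega) θ K).trans (by gcongr; linarith)
    _ = 2 / Real.sqrt K := by
        rw [Real.sqrt_div' _ hKpos.le, show (4 : ℝ) = 2 ^ 2 by norm_num, Real.sqrt_sq two_pos.le]
end
end

section
/- Let $x \in \mathbb{C}^{N_1 N_2}$ be viewed as $N_1$ blocks $x_1,\dots,x_{N_1} \in \mathbb{C}^{N_2}$, and let $s_1 \le N_1$, $s_2 \le N_2$. For each block $i$, let $S_i \subseteq \{1,\dots,N_2\}$ be a set of $s_2$ indices such that $|(x_i)_k| \ge |(x_i)_l|$ for all $k \in S_i$ and $l \notin S_i$, and let $B \subseteq \{1,\dots,N_1\}$ be a set of $s_1$ block indices such that $\|(x_i)_{S_i}\| \ge \|(x_{i'})_{S_{i'}}\|$ for all $i \in B$ and $i' \notin B$, where $(x_i)_{S_i}$ denotes $x_i$ with all entries outside $S_i$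 set to zero. Define $z \in \mathbb{C}^{N_1 N_2}$ by $z_i = (x_i)_{S_i}$ for $i \in B$ and $z_i = 0$ otherwise. Then $z$ is hierarchically $(s_1,s_2)$-sparse and is a best hierarchically $(s_1,s_2)$-sparse approximation of $x$: $\|x - z\| \le \|x - y\|$ for every hierarchically $(s_1,s_2)$-sparse $y \in \mathbb{C}^{N_1 N_2}$. -/
set_option maxHeartbeats 1000000

open scoped BigOperators

noncomputable section

/-- If every value of `f` on `C` dominates every value outside `C`, and
`A` has no more elements than `C`, then the sum of the (nonnegative) `f`
over `A` is at most that over `C`. -/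
lemma sum_le_sum_dom {ι : Type*} [DecidableEq ι] (f : ι → ℝ) (hf : ∀ i, 0 ≤ f i)
    (A C : Finset ι) (hcard : A.card ≤ C.card)
    (hdom : ∀ k ∈ C, ∀ l, l ∉ C → f l ≤ f k) :
    ∑ i ∈ A, f i ≤ ∑ i ∈ C, f i := by
  have hAsplit : ∑ i ∈ A ∩ C, f i + ∑ i ∈ A \ C, f i = ∑ i ∈ A, f i := by
    rw [add_comm, ← Finset.sdiff_inter_self_left A C]
    exact Finset.sum_sdiff Finset.inter_subset_left
  have hCsplit : ∑ i ∈ C ∩ A, f i + ∑ i ∈ C \ A, f i = ∑ i ∈ C, f i := by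
    rw [add_comm, ← Finset.sdiff_inter_self_left C A]
    exact Finset.sum_sdiff Finset.inter_subset_left
  have hcards : (A \ C).card ≤ (C \ A).card := by
    have h1 := Finset.card_inter_add_card_sdiff A C
    have h2 := Finset.card_inter_add_card_sdiff C A
    rw [Finset.inter_comm] at h2
    omega
  have hdiff : ∑ i ∈ A \ C, f i ≤ ∑ i ∈ C \ A, f i := by
    rcases (A \ C).eq_empty_or_nonempty with h | h
    · rw [h, Finset.sum_empty]
      exact Finset.sum_nonneg fun i _ => hf i
    · have hCA : (C \ A).Nonempty := by
        rw [← Finset.card_pos] at h ⊢; omega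
      set m := (C \ A).inf' hCA f with hm
      have hm0 : 0 ≤ m := by
        obtain ⟨b, hb, hbe⟩ := Finset.exists_mem_eq_inf' hCA f
        rw [hm, hbe]; exact hf b
      have h1 : ∑ i ∈ A \ C, f i ≤ (A \ C).card • m := by
        apply Finset.sum_le_card_nsmul
        intro a ha
        apply Finset.le_inf'
        intro b hb
        exact hdom b (Finset.mem_sdiff.mp hb).1 a (Finset.mem_sdiff.mp ha).2
      have h2 : (C \ A).card • m ≤ ∑ i ∈ C \ A, f i :=
        Finset.card_nsmul_le_sum _ _ _ fun b hb => Finset.inf'_le f hb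
      calc ∑ i ∈ A \ C, f i ≤ (A \ C).card • m := h1
        _ ≤ (C \ A).card • m := by
            simp only [nsmul_eq_mul]
            exact mul_le_mul_of_nonneg_right (by exact_mod_cast hcards) hm0
        _ ≤ ∑ i ∈ C \ A, f i := h2
  have hic : ∑ i ∈ A ∩ C, f i = ∑ i ∈ C ∩ A, f i := by rw [Finset.inter_comm]
  linarith

lemma sum_filter_prod {N₁ N₂ : ℕ} (f : Fin N₁ × Fin N₂ → ℝ)
    (B : Finset (Fin N₁)) (S : Fin N₁ → Finset (Fin N₂)) :
    ∑ q ∈ Finset.univ.filter (fun q : Fin N₁ × Fin N₂ => q.1 ∈ B ∧ q.2 ∈ S q.1), f q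
      = ∑ i ∈ B, ∑ j ∈ S i, f (i, j) := by
  rw [Finset.sum_filter, Fintype.sum_prod_type]
  calc ∑ i : Fin N₁, ∑ j : Fin N₂, (if i ∈ B ∧ j ∈ S i then f (i, j) else 0)
      = ∑ i : Fin N₁, (if i ∈ B then ∑ j ∈ S i, f (i, j) else 0) := by
        refine Finset.sum_congr rfl fun i _ => ?_
        by_cases hi : i ∈ B
        · simp only [hi, true_and, if_true]
          rw [Finset.sum_ite_mem, Finset.univ_inter]
        · simp [hi]
    _ = ∑ i ∈ B, ∑ j ∈ S i, f (i, j) := by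
        rw [Finset.sum_ite_mem, Finset.univ_inter]

/-- The two-level hierarchical thresholding operator — keep, in each
block, the `s₂` largest-magnitude entries, then keep the `s₁` blocks whose resulting
restrictions have largest `ℓ₂` norm — produces a best hierarchically `(s₁,s₂)`-sparse
approximation. -/
theorem hierarchical_thresholding_is_best_approx {N₁ N₂ : ℕ} (s₁ s₂ : ℕ)
    (hs₁ : s₁ ≤ N₁) (hs₂ : s₂ ≤ N₂)
    (x : Fin N₁ × Fin N₂ → ℂ)
    (S : Fin N₁ → Finset (Fin N₂)) (hScard : ∀ i, (S i).card = s₂)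
    (hSmax : ∀ i : Fin N₁, ∀ k ∈ S i, ∀ l : Fin N₂, l ∉ S i → ‖x (i, l)‖ ≤ ‖x (i, k)‖)
    (B : Finset (Fin N₁)) (hBcard : B.card = s₁)
    (hBmax : ∀ i ∈ B, ∀ i' : Fin N₁, i' ∉ B →
      Real.sqrt (∑ j ∈ S i', ‖x (i', j)‖ ^ 2) ≤ Real.sqrt (∑ j ∈ S i, ‖x (i, j)‖ ^ 2))
    (z : Fin N₁ × Fin N₂ → ℂ)
    (hz : z = fun q => if q.1 ∈ B ∧ q.2 ∈ S q.1 then x q else 0) :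
    HiSparse2 s₁ s₂ z ∧
    ∀ y : Fin N₁ × Fin N₂ → ℂ, HiSparse2 s₁ s₂ y →
      Real.sqrt (sqnorm (x - z)) ≤ Real.sqrt (sqnorm (x - y)) := by
  classical
  have hf0 : ∀ q : Fin N₁ × Fin N₂, (0:ℝ) ≤ ‖x q‖ ^ 2 := fun q => by positivity
  constructor
  · constructor
    · have hsub : {i : Fin N₁ | ∃ j, z (i, j) ≠ 0} ⊆ ↑B := by
        intro i hi
        obtain ⟨j, hj⟩ := hi
        rw [hz] at hj
        by_contra hiB
        simp only [ne_eq, ite_eq_right_iff, not_forall] at hj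
        exact hiB (Finset.mem_coe.mpr hj.1.1)
      calc {i : Fin N₁ | ∃ j, z (i, j) ≠ 0}.ncard
          ≤ (↑B : Set (Fin N₁)).ncard := Set.ncard_le_ncard hsub B.finite_toSet
        _ = s₁ := by rw [Set.ncard_coe_finset, hBcard]
    · intro i
      unfold Sparse
      have hsub : Function.support (fun j => z (i, j)) ⊆ ↑(S i) := by
        intro j hj
        simp only [Function.mem_support] at hj
        rw [hz] at hj
        by_contra hjS
        simp only [ne_eq, ite_eq_right_iff, not_forall] at hj
        exact hjS (Finset.mem_coe.mpr hj.1.2)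
      calc (Function.support fun j => z (i, j)).ncard
          ≤ (↑(S i) : Set (Fin N₂)).ncard := Set.ncard_le_ncard hsub (S i).finite_toSet
        _ = s₂ := by rw [Set.ncard_coe_finset, hScard]
  · intro y hy
    apply Real.sqrt_le_sqrt
    set B' : Finset (Fin N₁) := Finset.univ.filter (fun i => ∃ j, y (i, j) ≠ 0) with hB'
    set T : Fin N₁ → Finset (Fin N₂) := fun i => Finset.univ.filter (fun j => y (i, j) ≠ 0)
      with hT
    have hB'card : B'.card ≤ s₁ := by
      have h := hy.1
      have heq : {i : Fin N₁ | ∃ j, y (i, j) ≠ 0} = ↑B' := by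
        ext i; simp [hB']
      rw [heq, Set.ncard_coe_finset] at h
      exact h
    have hTcard : ∀ i, (T i).card ≤ s₂ := by
      intro i
      have h := hy.2 i
      unfold Sparse at h
      have heq : Function.support (fun j => y (i, j)) = ↑(T i) := by
        ext j; simp [hT, Function.mem_support]
      rw [heq, Set.ncard_coe_finset] at h
      exact h
    have hblock : ∀ i, ∑ j ∈ T i, ‖x (i, j)‖ ^ 2 ≤ ∑ j ∈ S i, ‖x (i, j)‖ ^ 2 := by
      intro i
      refine sum_le_sum_dom _ (fun j => hf0 (i, j)) _ _ (by rw [hScard]; exact hTcard i) ?_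
      intro k hk l hl
      exact pow_le_pow_left₀ (norm_nonneg _) (hSmax i k hk l hl) 2
    have hblocks : ∑ i ∈ B', ∑ j ∈ S i, ‖x (i, j)‖ ^ 2 ≤ ∑ i ∈ B, ∑ j ∈ S i, ‖x (i, j)‖ ^ 2 := by
      refine sum_le_sum_dom (fun i => ∑ j ∈ S i, ‖x (i, j)‖ ^ 2)
        (fun i => Finset.sum_nonneg fun j _ => hf0 (i, j)) _ _
        (by rw [hBcard]; exact hB'card) ?_
      intro k hk l hl
      have h := hBmax k hk l hl
      exact (Real.sqrt_le_sqrt_iff (Finset.sum_nonneg fun j _ => hf0 (k, j))).mp h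
    have key : ∑ q ∈ Finset.univ.filter (fun q : Fin N₁ × Fin N₂ => y q ≠ 0), ‖x q‖ ^ 2
        ≤ ∑ q ∈ Finset.univ.filter
            (fun q : Fin N₁ × Fin N₂ => q.1 ∈ B ∧ q.2 ∈ S q.1), ‖x q‖ ^ 2 := by
      calc ∑ q ∈ Finset.univ.filter (fun q : Fin N₁ × Fin N₂ => y q ≠ 0), ‖x q‖ ^ 2
          ≤ ∑ q ∈ Finset.univ.filter
              (fun q : Fin N₁ × Fin N₂ => q.1 ∈ B' ∧ q.2 ∈ T q.1), ‖x q‖ ^ 2 := by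
            refine Finset.sum_le_sum_of_subset_of_nonneg ?_ (fun q _ _ => hf0 q)
            intro q hq
            simp only [Finset.mem_filter, Finset.mem_univ, true_and] at hq ⊢
            refine ⟨?_, ?_⟩
            · simp only [hB', Finset.mem_filter, Finset.mem_univ, true_and]
              exact ⟨q.2, by simpa using hq⟩
            · simp only [hT, Finset.mem_filter, Finset.mem_univ, true_and]
              simpa using hq
        _ = ∑ i ∈ B', ∑ j ∈ T i, ‖x (i, j)‖ ^ 2 := sum_filter_prod (fun q => ‖x q‖ ^ 2) B' T
        _ ≤ ∑ i ∈ B', ∑ j ∈ S i, ‖x (i, j)‖ ^ 2 := Finset.sum_le_sum fun i _ => hblock i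
        _ ≤ ∑ i ∈ B, ∑ j ∈ S i, ‖x (i, j)‖ ^ 2 := hblocks
        _ = ∑ q ∈ Finset.univ.filter
              (fun q : Fin N₁ × Fin N₂ => q.1 ∈ B ∧ q.2 ∈ S q.1), ‖x q‖ ^ 2 :=
            (sum_filter_prod (fun q => ‖x q‖ ^ 2) B S).symm
    -- expand the two sqnorms
    have hzsplit :
        sqnorm (x - z)
          = ∑ q ∈ Finset.univ.filter
              (fun q : Fin N₁ × Fin N₂ => ¬(q.1 ∈ B ∧ q.2 ∈ S q.1)), ‖x q‖ ^ 2 := by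
      unfold sqnorm
      calc ∑ q : Fin N₁ × Fin N₂, ‖(x - z) q‖ ^ 2
          = ∑ q : Fin N₁ × Fin N₂,
              (if ¬(q.1 ∈ B ∧ q.2 ∈ S q.1) then ‖x q‖ ^ 2 else 0) := by
            refine Finset.sum_congr rfl fun q _ => ?_
            by_cases h : q.1 ∈ B ∧ q.2 ∈ S q.1 <;> simp [hz, Pi.sub_apply, h]
        _ = ∑ q ∈ Finset.univ.filter
              (fun q : Fin N₁ × Fin N₂ => ¬(q.1 ∈ B ∧ q.2 ∈ S q.1)), ‖x q‖ ^ 2 :=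
            (Finset.sum_filter _ _).symm
    have hysplit :
        ∑ q ∈ Finset.univ.filter
            (fun q : Fin N₁ × Fin N₂ => ¬ y q ≠ 0), ‖x q‖ ^ 2 ≤ sqnorm (x - y) := by
      unfold sqnorm
      calc ∑ q ∈ Finset.univ.filter
            (fun q : Fin N₁ × Fin N₂ => ¬ y q ≠ 0), ‖x q‖ ^ 2
          = ∑ q ∈ Finset.univ.filter
              (fun q : Fin N₁ × Fin N₂ => ¬ y q ≠ 0), ‖(x - y) q‖ ^ 2 := by
            refine Finset.sum_congr rfl fun q hq => ?_
            simp only [Finset.mem_filter, Finset.mem_univ, true_and, not_not] at hq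
            simp [Pi.sub_apply, hq]
        _ ≤ ∑ q : Fin N₁ × Fin N₂, ‖(x - y) q‖ ^ 2 :=
            Finset.sum_le_sum_of_subset_of_nonneg (Finset.filter_subset _ _)
              (fun q _ _ => by positivity)
    have htot1 := Finset.sum_filter_add_sum_filter_not Finset.univ
      (fun q : Fin N₁ × Fin N₂ => q.1 ∈ B ∧ q.2 ∈ S q.1) (fun q => ‖x q‖ ^ 2)
    have htot2 := Finset.sum_filter_add_sum_filter_not Finset.univ
      (fun q : Fin N₁ × Fin N₂ => y q ≠ 0) (fun q => ‖x q‖ ^ 2)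
    rw [hzsplit]
    linarith
end
end
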